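/- arXiv:1608.04708 — 8 statements merged into one kernel-verified Lean document; each statement's English description precedes it below -/
import Mathlib

section
/- Every morphism in the cyclic category from [k] to [m] admits a unique factorization as a cyclic permutation of [k] followed by a monotone (order-preserving) map [k] → [m] (Connes' factorization theorem). -/
/-!
The integer part `q i = f i / (m + 1)` of a morphism `f` is monotone and satisfies
`q (i + (k + 1)) = q i + 1`, so it increases by exactly one on each period:
`q i = (i - j) / (k + 1) + c` for a unique rotation `j` and constant `c`. On the window
`[j, j + k]` the values of `f` then lie in `[c (m + 1), c (m + 1) + m]`, which defines the
monotone map `μ`, and `f = μ ∘ τₖʲ` up to `c (m + 1)` because both sides are determined by their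
values on one window. Conversely the integer part of `interpZ k m μ j + c (m + 1)` is
`(i - j) / (k + 1) + c`, which recovers `j` and `c`, and then `μ`.
-/

/-- The standard model of a morphism `[k] → [m]` in the cyclic category `ΛC`:
a monotone map `f : ℤ → ℤ` with `f (i + (k+1)) = f i + (m+1)`, considered up to
adding an integer multiple of `m+1`.  `interpZ k m μ j` is the morphism `μ ∘ τₖʲ`
determined by a monotone map `μ : [k] → [m]` and a cyclic shift `τₖʲ` (where
`τₖ (i) = (i-1) mod (k+1)`). -/
def interpZ (k m : ℕ) (μ : Fin (k + 1) →o Fin (m + 1)) (j : Fin (k + 1)) : ℤ → ℤ :=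
  fun i =>
    ((i - ((j : ℕ) : ℤ)) / (k + 1)) * (m + 1) +
      ((μ ⟨((i - ((j : ℕ) : ℤ)) % (k + 1)).toNat, by
        have h1 : (0 : ℤ) ≤ (i - ((j : ℕ) : ℤ)) % (k + 1) :=
          Int.emod_nonneg _ (by positivity)
        have h2 : (i - ((j : ℕ) : ℤ)) % (k + 1) < (k + 1) :=
          Int.emod_lt_of_pos _ (by positivity)
        omega⟩ : Fin (m + 1)) : ℕ)

open AddConstMapClass

lemma map_add_mul_of_map_add {f : ℤ → ℤ} {a b : ℤ} (h : ∀ x, f (x + a) = f x + b) (x n : ℤ) :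
    f (x + n * a) = f x + n * b := by
  simpa using map_add_zsmul (AddConstMap.mk f h) x n

lemma eq_of_map_add_of_forall_fin_eq {k : ℕ} {b : ℤ} {g h : ℤ → ℤ}
    (hg : ∀ x, g (x + (k + 1)) = g x + b) (hh : ∀ x, h (x + (k + 1)) = h x + b) (j : ℤ)
    (hwin : ∀ t : Fin (k + 1), g (j + (t : ℕ)) = h (j + (t : ℕ))) : g = h := by
  funext i
  have hK : (0 : ℤ) < k + 1 := by positivity
  have h0 := Int.emod_nonneg (i - j) hK.ne'
  have h1 := Int.emod_lt_of_pos (i - j) hK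
  obtain ⟨t, ht⟩ : ∃ t : Fin (k + 1), ((t : ℕ) : ℤ) = (i - j) % (k + 1) :=
    ⟨⟨((i - j) % (k + 1)).toNat, by omega⟩, by simp only [Int.toNat_of_nonneg h0]⟩
  have hi : i = j + (t : ℕ) + (i - j) / (k + 1) * (k + 1) := by
    linarith [Int.emod_add_mul_ediv (i - j) (k + 1)]
  rw [hi, map_add_mul_of_map_add hg, map_add_mul_of_map_add hh, hwin]

lemma add_sub_ediv_self {K : ℤ} (hK : K ≠ 0) (i j : ℤ) : (i + K - j) / K = (i - j) / K + 1 := by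
  rw [add_sub_right_comm, ← Int.add_mul_ediv_right _ _ hK, one_mul]

lemma exists_eq_ediv_add_of_monotone {k : ℕ} {q : ℤ → ℤ} (hmono : Monotone q)
    (hper : ∀ i, q (i + (k + 1)) = q i + 1) :
    ∃ (j : Fin (k + 1)) (c : ℤ), ∀ i, q i = (i - (j : ℕ)) / (k + 1) + c := by
  have hK : (0 : ℤ) < k + 1 := by positivity
  have hk : q (-1) < q k := by
    have := hper (-1)
    rw [show (-1 : ℤ) + (k + 1) = k by ring] at this
    omega
  have hjump : ∃ s : ℕ, q (-1) < q s := ⟨k, hk⟩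
  obtain ⟨s, hs, hmin⟩ : ∃ s : ℕ, q (-1) < q s ∧ ∀ n < s, ¬ q (-1) < q n :=
    ⟨Nat.find hjump, Nat.find_spec hjump, fun n => Nat.find_min hjump⟩
  have hsk : s ≤ k := by
    by_contra! h
    exact hmin k h hk
  have hs_pred : q (s - 1) = q (-1) := by
    rcases Nat.eq_zero_or_pos s with h0 | hpos
    · simp [h0]
    · have hle : q (-1) ≤ q (s - 1) := hmono (by omega)
      have := hmin (s - 1) (by omega)
      rw [Nat.cast_sub hpos, Nat.cast_one] at this
      omega
  have hwin : ∀ t : Fin (k + 1), q (s + (t : ℕ)) = q (-1) + 1 := by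
    intro t
    have hlo : q s ≤ q (s + (t : ℕ)) := hmono (by omega)
    have hhi : q (s + (t : ℕ)) ≤ q (s - 1 + (k + 1)) := hmono (by omega)
    rw [hper, hs_pred] at hhi
    omega
  refine ⟨⟨s, by omega⟩, q (-1) + 1, congrFun (eq_of_map_add_of_forall_fin_eq
    (h := fun i => (i - s) / (k + 1) + (q (-1) + 1)) hper ?_ s ?_)⟩
  · intro x
    rw [add_sub_ediv_self hK.ne']
    ring
  · intro t
    rw [hwin, add_sub_cancel_left, Int.ediv_eq_zero_of_lt (by positivity) (by omega), zero_add]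

lemma eq_of_forall_sub_ediv_add_eq {k : ℕ} {j l : Fin (k + 1)} {c d : ℤ}
    (h : ∀ i : ℤ, (i - (j : ℕ)) / (k + 1) + c = (i - (l : ℕ)) / (k + 1) + d) :
    j = l ∧ c = d := by
  wlog hjl : j ≤ l generalizing j l c d
  · obtain ⟨hlj, hdc⟩ := this (fun i => (h i).symm) (le_of_not_ge hjl)
    exact ⟨hlj.symm, hdc.symm⟩
  have hK : (0 : ℤ) < k + 1 := by positivity
  have hjl' : ((j : ℕ) : ℤ) ≤ (l : ℕ) := by exact_mod_cast hjl
  have hlk : ((l : ℕ) : ℤ) < k + 1 := by exact_mod_cast l.isLt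
  have hcd : c = d := by
    have := h (l : ℕ)
    rwa [sub_self, Int.zero_ediv, Int.ediv_eq_zero_of_lt (by omega) (by omega), zero_add,
      zero_add] at this
  refine ⟨Fin.ext ?_, hcd⟩
  by_contra hne
  -- just before `l` the right-hand side has dropped by one, the left-hand side not yet
  have := h ((l : ℕ) - 1)
  rw [sub_sub_cancel_left, Int.neg_one_ediv, Int.sign_eq_one_of_pos hK,
    Int.ediv_eq_zero_of_lt (by omega) (by omega)] at this
  omega

lemma exists_orderHom_fin_val_eq {α : Type*} [Preorder α] {n : ℕ} {g : α → ℤ} (hg : Monotone g)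
    (hbound : ∀ a, 0 ≤ g a ∧ g a < n) : ∃ μ : α →o Fin n, ∀ a, ((μ a : ℕ) : ℤ) = g a :=
  ⟨⟨fun a => ⟨(g a).toNat, by have := hbound a; omega⟩,
    fun _ _ hab => Fin.mk_le_mk.mpr (Int.toNat_le_toNat (hg hab))⟩,
    fun a => Int.toNat_of_nonneg (hbound a).1⟩

section interpZ

variable {k m : ℕ}

lemma interpZ_ediv (μ : Fin (k + 1) →o Fin (m + 1)) (j : Fin (k + 1)) (i : ℤ) :
    interpZ k m μ j i / (m + 1) = (i - (j : ℕ)) / (k + 1) := by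
  rw [interpZ, add_comm, Int.add_mul_ediv_right _ _ (by positivity),
    Int.ediv_eq_zero_of_lt (by positivity) (by exact_mod_cast (μ _).isLt), zero_add]

lemma interpZ_add_fin (μ : Fin (k + 1) →o Fin (m + 1)) (j t : Fin (k + 1)) :
    interpZ k m μ j ((j : ℕ) + (t : ℕ)) = (μ t : ℕ) := by
  have ht : ((t : ℕ) : ℤ) < k + 1 := by exact_mod_cast t.isLt
  simp only [interpZ, add_sub_cancel_left, Int.emod_eq_of_lt (Nat.cast_nonneg _) ht,
    Int.ediv_eq_zero_of_lt (Nat.cast_nonneg _) ht, Int.toNat_natCast, zero_mul, zero_add]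

lemma interpZ_add_period (μ : Fin (k + 1) →o Fin (m + 1)) (j : Fin (k + 1)) (i : ℤ) :
    interpZ k m μ j (i + (k + 1)) = interpZ k m μ j i + (m + 1) := by
  simp only [interpZ, add_sub_ediv_self (by positivity : (k : ℤ) + 1 ≠ 0)]
  simp only [add_sub_right_comm, Int.add_emod_right]
  ring

lemma eq_of_interpZ_add_mul_eq {μ ν : Fin (k + 1) →o Fin (m + 1)} {j l : Fin (k + 1)} {c d : ℤ}
    (h : ∀ i, interpZ k m μ j i + c * (m + 1) = interpZ k m ν l i + d * (m + 1)) :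
    μ = ν ∧ j = l := by
  have hM : (m : ℤ) + 1 ≠ 0 := by positivity
  obtain ⟨rfl, rfl⟩ : j = l ∧ c = d := by
    refine eq_of_forall_sub_ediv_add_eq fun i => ?_
    simpa only [Int.add_mul_ediv_right _ _ hM, interpZ_ediv] using
      congrArg (· / ((m : ℤ) + 1)) (h i)
  refine ⟨DFunLike.ext _ _ fun t => Fin.ext ?_, rfl⟩
  have := h ((j : ℕ) + (t : ℕ))
  rw [interpZ_add_fin, interpZ_add_fin] at this
  omega

lemma exists_interpZ_add_mul_eq {f : ℤ → ℤ} (hmono : Monotone f)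
    (hper : ∀ i, f (i + (k + 1)) = f i + (m + 1)) :
    ∃ (μ : Fin (k + 1) →o Fin (m + 1)) (j : Fin (k + 1)) (c : ℤ),
      ∀ i, f i = interpZ k m μ j i + c * (m + 1) := by
  have hM : (0 : ℤ) < m + 1 := by positivity
  obtain ⟨j, c, hq⟩ := exists_eq_ediv_add_of_monotone (k := k) (q := fun i => f i / (m + 1))
    (fun _ _ hab => Int.ediv_le_ediv hM (hmono hab))
    (fun i => by simpa only [hper, one_mul] using Int.add_mul_ediv_right (f i) 1 hM.ne')
  have hwin : ∀ t : Fin (k + 1),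
      f ((j : ℕ) + (t : ℕ)) - c * (m + 1) = f ((j : ℕ) + (t : ℕ)) % (m + 1) := by
    intro t
    have ht : ((t : ℕ) : ℤ) < k + 1 := by exact_mod_cast t.isLt
    have := hq ((j : ℕ) + (t : ℕ))
    rw [add_sub_cancel_left, Int.ediv_eq_zero_of_lt (by positivity) ht, zero_add] at this
    rw [Int.emod_def, ← this, mul_comm]
  obtain ⟨μ, hμ⟩ := exists_orderHom_fin_val_eq (n := m + 1)
    (g := fun t : Fin (k + 1) => f ((j : ℕ) + (t : ℕ)) - c * (m + 1))
    (fun a b hab => by dsimp only; gcongr; exact hmono (by simpa using hab))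
    (fun t => by
      rw [hwin]
      exact ⟨Int.emod_nonneg _ hM.ne', by exact_mod_cast Int.emod_lt_of_pos _ hM⟩)
  refine ⟨μ, j, c, congrFun (eq_of_map_add_of_forall_fin_eq
    (h := fun i => interpZ k m μ j i + c * (m + 1)) hper ?_ j ?_)⟩
  · intro i
    rw [interpZ_add_period]
    ring
  · intro t
    rw [interpZ_add_fin, hμ]
    ring

end interpZ

/-- Connes' factorization theorem: every morphism `[k] → [m]` of the cyclic category,
presented as a monotone `ℤ → ℤ` map `f` with `f (i + (k+1)) = f i + (m+1)` modulo
translation by `m+1`, factors uniquely as a cyclic permutation `τₖʲ` (with `0 ≤ j ≤ k`)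
followed by a monotone map `μ : [k] → [m]`. -/
theorem connes_factorization (k m : ℕ) (f : ℤ → ℤ) (hmono : Monotone f)
    (hper : ∀ i, f (i + (k + 1)) = f i + (m + 1)) :
    ∃! p : (Fin (k + 1) →o Fin (m + 1)) × Fin (k + 1),
      ∃ c : ℤ, ∀ i, f i = interpZ k m p.1 p.2 i + c * (m + 1) := by
  obtain ⟨μ, j, c, hf⟩ := exists_interpZ_add_mul_eq hmono hper
  refine ⟨(μ, j), ⟨c, hf⟩, ?_⟩
  rintro ⟨ν, l⟩ ⟨d, hd⟩
  obtain ⟨rfl, rfl⟩ := eq_of_interpZ_add_mul_eq fun i => (hd i).symm.trans (hf i)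
  rfl
end

section
/- For a strictly monotone injection ∂ : [k] → [m] and a cyclic shift τₘⁱ on [m], there exist a unique strictly monotone injection ∂' : [k] → [m] and a unique cyclic shift τₖʲ on [k] with τₘⁱ ∘ ∂ = ∂' ∘ τₖʲ; moreover j = ∂ᵒᵖ(i), where ∂ᵒᵖ(i) = 0 if ∂(a) < i for all a, and otherwise ∂ᵒᵖ(i) = min{a : ∂(a) ≥ i}. -/
/-- `dop d i` is `∂ᵒᵖ(i)`: the minimum of `{a | d a ≥ i}` if this set is nonempty
(i.e. unless `d a < i` for all `a`), and `0` otherwise. -/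
def dop {k m : ℕ} (d : Fin (k + 1) → Fin (m + 1)) (i : Fin (m + 1)) : Fin (k + 1) :=
  if h : (Finset.univ.filter fun a => i ≤ d a).Nonempty then
    (Finset.univ.filter fun a => i ≤ d a).min' h
  else 0

lemma fin_sub_val_of_le {m : ℕ} {i x : Fin (m+1)} (h : i ≤ x) :
    ((x - i : Fin (m+1)) : ℕ) = (x : ℕ) - (i : ℕ) := by
  rw [Fin.sub_def]
  have hx := x.isLt
  have hi := i.isLt
  rw [Fin.le_def] at h
  show ((m+1) - i + x) % (m+1) = x - i
  have h1 : (m+1) - (i:ℕ) + x = (x - i) + (m+1) := by omega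
  rw [h1, Nat.add_mod_right, Nat.mod_eq_of_lt (by omega)]

lemma fin_sub_val_of_lt {m : ℕ} {i x : Fin (m+1)} (h : x < i) :
    ((x - i : Fin (m+1)) : ℕ) = (x : ℕ) + (m+1) - (i : ℕ) := by
  rw [Fin.sub_def]
  have hx := x.isLt
  have hi := i.isLt
  rw [Fin.lt_def] at h
  show ((m+1) - i + x) % (m+1) = x + (m+1) - i
  rw [Nat.mod_eq_of_lt (by omega)]
  omega

lemma fin_sub_lt_sub {m : ℕ} {i x y : Fin (m+1)}
    (h : (i ≤ x ∧ x < y) ∨ (x < y ∧ y < i) ∨ (i ≤ x ∧ y < i)) :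
    x - i < y - i := by
  rw [Fin.lt_def]
  have hx := x.isLt
  have hy := y.isLt
  rcases h with ⟨h1, h2⟩ | ⟨h1, h2⟩ | ⟨h1, h2⟩
  · have h3 : i ≤ y := le_trans h1 (le_of_lt h2)
    rw [fin_sub_val_of_le h1, fin_sub_val_of_le h3]
    rw [Fin.le_def] at h1; rw [Fin.lt_def] at h2; omega
  · have h3 : x < i := lt_trans h1 h2
    rw [fin_sub_val_of_lt h3, fin_sub_val_of_lt h2]
    rw [Fin.lt_def] at h1 h2 h3; omega
  · rw [fin_sub_val_of_le h1, fin_sub_val_of_lt h2]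
    rw [Fin.le_def] at h1; rw [Fin.lt_def] at h2; omega

lemma dop_lt {k m : ℕ} (d : Fin (k + 1) → Fin (m + 1)) (i : Fin (m + 1))
    {a : Fin (k+1)} (h : a < dop d i) : d a < i := by
  by_contra hc
  push_neg at hc
  have hmem : a ∈ Finset.univ.filter fun a => i ≤ d a := by
    simp [Finset.mem_filter, hc]
  have hne : (Finset.univ.filter fun a => i ≤ d a).Nonempty := ⟨a, hmem⟩
  rw [dop, dif_pos hne] at h
  exact absurd (Finset.min'_le _ _ hmem) (not_le.mpr h)

lemma dop_le {k m : ℕ} (d : Fin (k + 1) → Fin (m + 1)) (i : Fin (m + 1))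
    (hne : (Finset.univ.filter fun a => i ≤ d a).Nonempty) : i ≤ d (dop d i) := by
  rw [dop, dif_pos hne]
  have := Finset.min'_mem _ hne
  simpa using this

lemma dop_empty {k m : ℕ} (d : Fin (k + 1) → Fin (m + 1)) (i : Fin (m + 1))
    (hne : ¬ (Finset.univ.filter fun a => i ≤ d a).Nonempty) :
    dop d i = 0 ∧ ∀ a, d a < i := by
  refine ⟨by rw [dop, dif_neg hne], fun a => ?_⟩
  by_contra hc
  push_neg at hc
  exact hne ⟨a, by simp [hc]⟩

lemma dop_shift_mono {k m : ℕ} (d : Fin (k + 1) → Fin (m + 1)) (hd : StrictMono d)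
    (i : Fin (m + 1)) : StrictMono (fun b => d (b + dop d i) - i) := by
  set j := dop d i with hj
  intro b1 b2 hlt
  simp only
  have hK := j.isLt
  have hb1 := b1.isLt
  have hb2 := b2.isLt
  rw [Fin.lt_def] at hlt
  have hc1 : ((b1 + j : Fin (k+1)) : ℕ) = ((b1:ℕ) + j) % (k+1) := Fin.val_add b1 j
  have hc2 : ((b2 + j : Fin (k+1)) : ℕ) = ((b2:ℕ) + j) % (k+1) := Fin.val_add b2 j
  apply fin_sub_lt_sub
  by_cases hB2 : (b2:ℕ) + j ≤ k
  · -- no wrap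
    have hB1 : (b1:ℕ) + j ≤ k := by omega
    rw [Nat.mod_eq_of_lt (by omega)] at hc2
    rw [Nat.mod_eq_of_lt (by omega)] at hc1
    have hlt' : b1 + j < b2 + j := by rw [Fin.lt_def]; omega
    by_cases hne : (Finset.univ.filter fun a => i ≤ d a).Nonempty
    · left
      refine ⟨le_trans (dop_le d i hne) (hd.monotone ?_), hd hlt'⟩
      rw [Fin.le_def]; omega
    · obtain ⟨-, hall⟩ := dop_empty d i hne
      exact Or.inr (Or.inl ⟨hd hlt', hall _⟩)
  · have hjne : j ≠ 0 := by
      intro h0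
      rw [h0] at hB2
      simp at hB2
      omega
    have hne : (Finset.univ.filter fun a => i ≤ d a).Nonempty := by
      by_contra hne
      exact hjne (dop_empty d i hne).1
    have hj1 : 1 ≤ (j:ℕ) := by
      rcases Nat.eq_zero_or_pos (j:ℕ) with h | h
      · exact absurd (Fin.ext h : j = 0) hjne
      · exact h
    have hc2' : ((b2 + j : Fin (k+1)) : ℕ) = (b2:ℕ) + j - (k+1) := by
      rw [hc2, Nat.mod_eq_sub_mod (by omega), Nat.mod_eq_of_lt (by omega)]
    have hd2 : d (b2 + j) < i := by
      apply dop_lt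
      rw [Fin.lt_def, hc2']
      omega
    by_cases hB1 : (b1:ℕ) + j ≤ k
    · -- b1 doesn't wrap, b2 wraps
      rw [Nat.mod_eq_of_lt (by omega)] at hc1
      right; right
      refine ⟨le_trans (dop_le d i hne) (hd.monotone ?_), hd2⟩
      rw [Fin.le_def]; omega
    · -- both wrap
      have hc1' : ((b1 + j : Fin (k+1)) : ℕ) = (b1:ℕ) + j - (k+1) := by
        rw [hc1, Nat.mod_eq_sub_mod (by omega), Nat.mod_eq_of_lt (by omega)]
      have hd1 : d (b1 + j) < i := by
        apply dop_lt
        rw [Fin.lt_def, hc1']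
        omega
      exact Or.inr (Or.inl ⟨hd (by rw [Fin.lt_def]; omega), hd2⟩)

/-- For a strictly monotone injection `∂ : [k] → [m]` and a cyclic shift `τₘⁱ` on `[m]`
(`τₘⁱ x = x - i`), there are a unique strictly monotone `∂' : [k] → [m]` and a unique
cyclic shift `τₖʲ` on `[k]` with `τₘⁱ ∘ ∂ = ∂' ∘ τₖʲ`; moreover `j = ∂ᵒᵖ(i)`. -/
theorem cyclic_mono_factorization {k m : ℕ} (d : Fin (k + 1) → Fin (m + 1))
    (hd : StrictMono d) (i : Fin (m + 1)) :
    (∃! p : (Fin (k + 1) → Fin (m + 1)) × Fin (k + 1),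
        StrictMono p.1 ∧ ∀ a, d a - i = p.1 (a - p.2)) ∧
    (∀ p : (Fin (k + 1) → Fin (m + 1)) × Fin (k + 1),
        (StrictMono p.1 ∧ ∀ a, d a - i = p.1 (a - p.2)) → p.2 = dop d i) := by
  classical
  set j := dop d i with hjdef
  set D : Fin (k+1) → Fin (m+1) := fun b => d (b + j) - i with hDdef
  have hD : StrictMono D := dop_shift_mono d hd i
  have hDe : ∀ a, d a - i = D (a - j) := by
    intro a
    simp only [hDdef]
    rw [sub_add_cancel]
  have hmin : ∀ p : (Fin (k+1) → Fin (m+1)) × Fin (k+1),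
      (StrictMono p.1 ∧ ∀ a, d a - i = p.1 (a - p.2)) → ∀ a, d p.2 - i ≤ d a - i := by
    rintro ⟨q1, q2⟩ ⟨hm, he⟩ a
    have h0 : d q2 - i = q1 0 := by rw [he q2, sub_self]
    rw [h0, he a]
    exact hm.monotone (Fin.zero_le _)
  have huniq : ∀ p : (Fin (k+1) → Fin (m+1)) × Fin (k+1),
      (StrictMono p.1 ∧ ∀ a, d a - i = p.1 (a - p.2)) → p.2 = j := by
    rintro ⟨q1, q2⟩ h
    have h1 := hmin ⟨q1, q2⟩ h j
    have h2 := hmin ⟨D, j⟩ ⟨hD, hDe⟩ q2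
    have h3 : d q2 - i = d j - i := le_antisymm h1 h2
    have h4 : d q2 = d j := by
      have h5 := congrArg (· + i) h3
      simpa [sub_add_cancel] using h5
    exact hd.injective h4
  refine ⟨⟨(D, j), ⟨hD, hDe⟩, ?_⟩, huniq⟩
  rintro ⟨q1, q2⟩ ⟨hm, he⟩
  have hq2 : q2 = j := huniq ⟨q1, q2⟩ ⟨hm, he⟩
  subst hq2
  refine Prod.ext ?_ rfl
  funext b
  show q1 b = D b
  have h6 := he (b + j)
  rw [add_sub_cancel_right] at h6
  exact h6.symm
end

section
/- If k+1 is odd (k even) and w : Fin (n+1) → Fin (k+1) is a surjective word, then the rational parity P(w) is invariant under cyclic shift of the word: P(w ∘ τₙ) = P(w), where τₙ(i) = (i-1) mod (n+1). -/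
/-!
Re-indexing positions by `i ↦ i - 1` turns the sections of `w ∘ τ` into the sections of `w`, so
it suffices that `s ↦ (· - 1) ∘ s` preserves the sign of an injective section `s`. If no letter
sits at position `0`, the shift is monotone on the positions used and the inversions do not
change. Otherwise the letter at position `0` jumps to the last position: this toggles exactly the
`k` pairs of letters containing it, and `k` is even.
-/

/-- Sign of a section: `(-1)^(number of inversions)`. -/
def secSign {N K : ℕ} (s : Fin K → Fin N) : ℤ :=
  (-1) ^ (Finset.univ.filter
    (fun p : Fin K × Fin K => p.1 < p.2 ∧ s p.2 < s p.1)).card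

/-- Proper subwords (sections) of a word. -/
def wordSections {N K : ℕ} (w : Fin N → Fin K) : Finset (Fin K → Fin N) :=
  Finset.univ.filter fun s => ∀ j, w (s j) = j

/-- Rational parity of a word: average sign of its proper subwords. -/
def wordParity {N K : ℕ} (w : Fin N → Fin K) : ℚ :=
  (∑ s ∈ wordSections w, (secSign s : ℚ)) / ((wordSections w).card : ℚ)

open Finset Function
open scoped symmDiff

lemma Finset.card_add_card_eq_card_symmDiff_add {α : Type*} [DecidableEq α] (s t : Finset α) :
    #s + #t = #(s ∆ t) + 2 * #(s ∩ t) := by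
  rw [Finset.symmDiff_def, card_union_of_disjoint disjoint_sdiff_sdiff,
    ← card_sdiff_add_card_inter s t, ← card_sdiff_add_card_inter t s, inter_comm t s]
  ring

lemma neg_one_pow_card_eq_of_even_card_symmDiff {R α : Type*} [Ring R]
    [DecidableEq α] {s t : Finset α} (h : Even #(s ∆ t)) : (-1 : R) ^ #s = (-1) ^ #t := by
  have hst := card_add_card_eq_card_symmDiff_add s t
  rw [Nat.even_iff] at h
  rw [neg_one_pow_eq_pow_mod_two, neg_one_pow_eq_pow_mod_two (n := #t)]
  congr 1
  omega

namespace Fin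

variable {n : ℕ}

lemma sub_one_lt_sub_one_iff {x y : Fin (n + 1)} (hx : x ≠ 0) (hy : y ≠ 0) :
    x - 1 < y - 1 ↔ x < y := by
  rw [lt_def, lt_def, coe_sub_one, coe_sub_one, if_neg hx, if_neg hy]
  have := pos_iff_ne_zero.2 hx
  omega

lemma sub_one_lt_zero_sub_one {x : Fin (n + 1)} (hx : x ≠ 0) : x - 1 < 0 - 1 := by
  rw [lt_def, coe_sub_one, coe_sub_one, if_neg hx, if_pos rfl]
  omega

end Fin

section Inversions

variable {N K : ℕ}

def inversions (s : Fin K → Fin N) : Finset (Fin K × Fin K) :=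
  univ.filter fun p => p.1 < p.2 ∧ s p.2 < s p.1

lemma secSign_eq_neg_one_pow_card_inversions (s : Fin K → Fin N) :
    secSign s = (-1) ^ #(inversions s) := rfl

lemma inversions_eq_of_lt_iff {f g : Fin K → Fin N} (h : ∀ i j, g i < g j ↔ f i < f j) :
    inversions g = inversions f := by
  simp only [inversions, h]

def pairsThrough (j₀ : Fin K) : Finset (Fin K × Fin K) :=
  univ.filter fun p => p.1 < p.2 ∧ (p.1 = j₀ ∨ p.2 = j₀)

lemma card_pairsThrough {k : ℕ} (j₀ : Fin (k + 1)) : #(pairsThrough j₀) = k := by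
  have : pairsThrough j₀ = (univ.erase j₀).image fun i => (min i j₀, max i j₀) := by
    ext ⟨i, j⟩
    simp only [pairsThrough, mem_filter, mem_univ, true_and, mem_image, mem_erase, Prod.mk.injEq]
    constructor
    · rintro ⟨hij, rfl | rfl⟩
      · exact ⟨j, ⟨hij.ne', trivial⟩, min_eq_right hij.le, max_eq_left hij.le⟩
      · exact ⟨i, ⟨hij.ne, trivial⟩, min_eq_left hij.le, max_eq_right hij.le⟩
    · rintro ⟨a, ⟨ha, -⟩, rfl, rfl⟩
      simp only [min_def, max_def]
      split_ifs <;> omega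
  rw [this, card_image_of_injOn, card_erase_of_mem (mem_univ _), card_univ, Fintype.card_fin,
    Nat.add_sub_cancel]
  intro a ha b hb hab
  simp only [coe_erase, coe_univ, Set.mem_sdiff, Set.mem_univ, Set.mem_singleton_iff, true_and,
    Prod.mk.injEq, min_def, max_def] at ha hb hab
  split_ifs at hab <;> omega

lemma inversions_symmDiff_eq_pairsThrough {f g : Fin K → Fin N} (j₀ : Fin K)
    (hsame : ∀ i j, i ≠ j₀ → j ≠ j₀ → (g i < g j ↔ f i < f j))
    (hf : ∀ i, i ≠ j₀ → f j₀ < f i) (hg : ∀ i, i ≠ j₀ → g i < g j₀) :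
    inversions g ∆ inversions f = pairsThrough j₀ := by
  ext ⟨i, j⟩
  simp only [mem_symmDiff, inversions, pairsThrough, mem_filter, mem_univ, true_and]
  rcases eq_or_ne i j₀ with rfl | hi
  · have := hf j; have := hg j
    grind
  · rcases eq_or_ne j j₀ with rfl | hj
    · have := hf i; have := hg i
      grind
    · have := hsame j i hj hi
      grind

end Inversions

lemma secSign_sub_one {n k : ℕ} (hk : Even k) {t : Fin (k + 1) → Fin (n + 1)}
    (ht : Injective t) : secSign (fun j => t j - 1) = secSign t := by
  simp only [secSign_eq_neg_one_pow_card_inversions]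
  by_cases h0 : ∃ j₀, t j₀ = 0
  · obtain ⟨j₀, hj₀⟩ := h0
    have hne : ∀ i, i ≠ j₀ → t i ≠ 0 := fun i hi h => hi (ht (h.trans hj₀.symm))
    apply neg_one_pow_card_eq_of_even_card_symmDiff
    rw [inversions_symmDiff_eq_pairsThrough j₀, card_pairsThrough]
    · exact hk
    · exact fun i j hi hj => Fin.sub_one_lt_sub_one_iff (hne i hi) (hne j hj)
    · exact fun i hi => hj₀ ▸ Fin.pos_iff_ne_zero.2 (hne i hi)
    · exact fun i hi => hj₀ ▸ Fin.sub_one_lt_zero_sub_one (hne i hi)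
  · simp only [not_exists] at h0
    rw [inversions_eq_of_lt_iff fun i j => Fin.sub_one_lt_sub_one_iff (h0 i) (h0 j)]

section Sections

variable {N K : ℕ}

lemma injective_of_mem_wordSections {w : Fin N → Fin K} {s : Fin K → Fin N} (hs : s ∈ wordSections w) :
    Injective s := by
  simp only [wordSections, mem_filter, mem_univ, true_and] at hs
  exact LeftInverse.injective (g := w) hs

lemma wordSections_eq_map_wordSections_comp (w : Fin N → Fin K) (σ : Fin N ≃ Fin N) :
    wordSections w =
      (wordSections (w ∘ σ)).map (Equiv.arrowCongr (Equiv.refl _) σ).toEmbedding := by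
  ext s
  rw [mem_map_equiv]
  simp [wordSections]

lemma wordParity_comp_equiv (w : Fin N → Fin K) (σ : Fin N ≃ Fin N)
    (hσ : ∀ s : Fin K → Fin N, Injective s → secSign (σ ∘ s) = secSign s) :
    wordParity (w ∘ σ) = wordParity w := by
  rw [wordParity, wordParity, wordSections_eq_map_wordSections_comp w σ, card_map, sum_map]
  congr 1
  refine sum_congr rfl fun s hs => ?_
  exact congrArg (Int.cast : ℤ → ℚ) (hσ s (injective_of_mem_wordSections hs)).symm

end Sections

theorem wordParity_cyclicShift_invariant_general (n k : ℕ) (hk : Even k)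
    (w : Fin (n + 1) → Fin (k + 1)) :
    wordParity (fun i => w (i - 1)) = wordParity w :=
  wordParity_comp_equiv w (Equiv.subRight 1) fun _ hs => secSign_sub_one hk hs

/-- If the alphabet has odd size (`k` even), the rational parity of a surjective word
is invariant under the cyclic shift `τₙ i = i - 1` of the word. -/
theorem wordParity_cyclicShift_invariant (n k : ℕ) (hk : Even k)
    (w : Fin (n + 1) → Fin (k + 1)) (hw : Function.Surjective w) :
    wordParity (fun i => w (i - 1)) = wordParity w :=
  wordParity_cyclicShift_invariant_general n k hk w
end

section
/- Let X be an (n+1)×(k+1) matrix over a commutative ring with n ≥ k, and let s(X) denote the sum of all maximal minors (determinants of (k+1)×(k+1) submatrices given by choosing k+1 rows). Let δⱼ*X denote X with its j-th column deleted. If k+1 is odd, then s(X) = Σ_{j=0}^{k} (-1)^j s_{{j}}(X) · s(δⱼ*X), where s_{{j}}(X) is the sum of the entries of the j-th column of X. -/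
/-- Sum of all maximal minors of an `N × M` matrix. -/
def minorSum {N M : ℕ} {R : Type*} [CommRing R] (X : Matrix (Fin N) (Fin M) R) : R :=
  ∑ T ∈ (Finset.univ.powersetCard M : Finset (Finset (Fin N))).attach,
    Matrix.det (Matrix.of fun a b =>
      X (T.1.orderEmbOfFin (Finset.mem_powersetCard.mp T.2).2 a) b)

/-- `delCol X j` is the matrix `X` with its `j`-th column deleted. -/
def delCol {N M : ℕ} {R : Type*} (X : Matrix (Fin N) (Fin (M + 1)) R) (j : Fin (M + 1)) :
    Matrix (Fin N) (Fin M) R :=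
  Matrix.of fun i a => X i (j.succAbove a)

open Finset Matrix

lemma minorSum_eq_sum_dite {N M : ℕ} {R : Type*} [CommRing R]
    (Y : Matrix (Fin N) (Fin M) R) :
    minorSum Y = ∑ T ∈ (Finset.univ.powersetCard M : Finset (Finset (Fin N))),
      if h : T.card = M then
        Matrix.det (Matrix.of fun a b => Y (T.orderEmbOfFin h a) b) else 0 := by
  rw [minorSum, ← Finset.sum_attach (Finset.univ.powersetCard M)
    (fun T => if h : T.card = M then
        Matrix.det (Matrix.of fun a b => Y (T.orderEmbOfFin h a) b) else 0)]
  exact Finset.sum_congr rfl fun T _ => by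
    rw [dif_pos ((Finset.mem_powersetCard.mp T.2).2)]

section Aux
variable {R : Type*} [CommRing R] {n k : ℕ} (X : Matrix (Fin (n + 1)) (Fin (k + 1)) R)

/-- The bordered determinant: row `i` of `X` on top, then the rows of `S`. -/
noncomputable def dA (S : Finset (Fin (n + 1))) (i : Fin (n + 1)) : R :=
  if h : S.card = k then
    Matrix.det (Matrix.of (Fin.cons (X i) (fun a => X (S.orderEmbOfFin h a))))
  else 0

lemma dA_eq_zero {S : Finset (Fin (n + 1))} {i : Fin (n + 1)} (hi : i ∈ S) :
    dA X S i = 0 := by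
  unfold dA
  split
  · rename_i h
    obtain ⟨a, ha⟩ : ∃ a, S.orderEmbOfFin h a = i := by
      have := S.range_orderEmbOfFin h
      have : i ∈ Set.range (S.orderEmbOfFin h) := by rw [this]; exact_mod_cast hi
      exact this
    refine Matrix.det_zero_of_row_eq (Fin.succ_ne_zero a) ?_
    funext b
    simp only [Matrix.of_apply, Fin.cons_succ, Fin.cons_zero, ha]
  · rfl

lemma dA_erase {T : Finset (Fin (n + 1))} (h : T.card = k + 1) (m : Fin (k + 1)) :
    dA X (T.erase (T.orderEmbOfFin h m)) (T.orderEmbOfFin h m)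
      = (-1) ^ (m : ℕ) * Matrix.det (Matrix.of fun a b => X (T.orderEmbOfFin h a) b) := by
  set e := T.orderEmbOfFin h with he
  have hmem : e m ∈ T := T.orderEmbOfFin_mem h m
  have hcard : (T.erase (e m)).card = k := by
    simp [Finset.card_erase_of_mem hmem, h]
  have hES : (fun a => e (m.succAbove a)) = (T.erase (e m)).orderEmbOfFin hcard := by
    refine Finset.orderEmbOfFin_unique hcard (fun a => ?_) ?_
    · refine Finset.mem_erase.mpr ⟨fun hc => ?_, T.orderEmbOfFin_mem h _⟩
      exact Fin.succAbove_ne m a (e.injective hc)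
    · exact e.strictMono.comp (Fin.strictMono_succAbove m)
  unfold dA
  rw [dif_pos hcard]
  have key : Matrix.of (Fin.cons (X (e m))
        (fun a => X ((T.erase (e m)).orderEmbOfFin hcard a)))
      = (Matrix.of fun a b => X (e a) b).submatrix (m.cycleRange.symm : Equiv.Perm (Fin (k+1))) id := by
    funext p q
    refine Fin.cases ?_ (fun a => ?_) p
    · simp [Matrix.submatrix]
    · simp [Matrix.submatrix, ← hES]
  rw [key, Matrix.det_permute]
  congr 1
  have : Equiv.Perm.sign (m.cycleRange.symm : Equiv.Perm (Fin (k+1))) = (-1) ^ (m : ℕ) := by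
    rw [Equiv.Perm.sign_symm, Fin.sign_cycleRange]
  rw [this]
  push_cast
  ring

end Aux

/-- Okada-type expansion (from the sum-of-minors–Pfaffian identity): if `k+1` is odd,
then the sum of maximal minors of an `(n+1)×(k+1)` matrix `X` satisfies
`s(X) = Σⱼ (-1)^j s_{{j}}(X) · s(δⱼ*X)`, where `s_{{j}}(X)` is the `j`-th column sum. -/
theorem minorSum_expansion_odd {R : Type*} [CommRing R] (n k : ℕ) (hkn : k ≤ n)
    (hk : Even k) (X : Matrix (Fin (n + 1)) (Fin (k + 1)) R) :
    minorSum X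
      = ∑ j : Fin (k + 1), (-1) ^ (j : ℕ) * (∑ i, X i j) * minorSum (delCol X j) := by
  classical
  -- Step 1: rewrite the RHS as a sum of bordered determinants.
  have step1 : ∑ j : Fin (k + 1), (-1) ^ (j : ℕ) * (∑ i, X i j) * minorSum (delCol X j)
      = ∑ S ∈ (Finset.univ.powersetCard k : Finset (Finset (Fin (n+1)))),
          ∑ i : Fin (n + 1), dA X S i := by
    have expand : ∀ (S : Finset (Fin (n+1))) (i : Fin (n+1)),
        dA X S i = ∑ j : Fin (k+1), (-1) ^ (j : ℕ) * X i j *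
          (if h : S.card = k then
            Matrix.det (Matrix.of fun a b => (delCol X j) (S.orderEmbOfFin h a) b) else 0) := by
      intro S i
      unfold dA
      by_cases h : S.card = k
      · rw [dif_pos h, Matrix.det_succ_row_zero]
        refine Finset.sum_congr rfl fun j _ => ?_
        rw [dif_pos h]
        have hm : (Matrix.of (Fin.cons (X i) (fun a => X (S.orderEmbOfFin h a)))).submatrix
            Fin.succ j.succAbove
            = Matrix.of fun a b => (delCol X j) (S.orderEmbOfFin h a) b := by
          funext a b
          simp [delCol, Matrix.submatrix_apply]
        rw [hm]
        simp
      · simp [dif_neg h]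
    simp only [minorSum_eq_sum_dite]
    have h1 : ∀ j : Fin (k+1), (-1:R) ^ (j:ℕ) * (∑ i, X i j) *
        (∑ S ∈ (Finset.univ.powersetCard k : Finset (Finset (Fin (n+1)))),
          if h : S.card = k then
            Matrix.det (Matrix.of fun a b => (delCol X j) (S.orderEmbOfFin h a) b) else 0)
        = ∑ S ∈ (Finset.univ.powersetCard k : Finset (Finset (Fin (n+1)))),
            ∑ i : Fin (n+1), (-1:R) ^ (j:ℕ) * X i j *
              (if h : S.card = k then
                Matrix.det (Matrix.of fun a b => (delCol X j) (S.orderEmbOfFin h a) b) else 0) := by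
      intro j
      simp only [Finset.mul_sum, Finset.sum_mul]
    simp only [h1]
    conv_lhs => rw [Finset.sum_comm]
    refine Finset.sum_congr rfl fun S _ => ?_
    conv_lhs => rw [Finset.sum_comm]
    exact Finset.sum_congr rfl fun i _ => (expand S i).symm
  rw [step1, minorSum_eq_sum_dite]
  -- Step 2: for each S, drop the terms with i ∈ S, then reindex the double sum by (T, i∈T).
  have step2 : ∑ S ∈ (Finset.univ.powersetCard k : Finset (Finset (Fin (n+1)))),
          ∑ i : Fin (n + 1), dA X S i
      = ∑ T ∈ (Finset.univ.powersetCard (k+1) : Finset (Finset (Fin (n+1)))),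
          ∑ i ∈ T, dA X (T.erase i) i := by
    have drop : ∀ S : Finset (Fin (n+1)),
        ∑ i : Fin (n + 1), dA X S i = ∑ i ∈ (Finset.univ \ S), dA X S i := by
      intro S
      rw [← Finset.sum_subset (Finset.sdiff_subset)]
      intro i _ hi
      have : i ∈ S := by
        by_contra hc
        exact hi (Finset.mem_sdiff.mpr ⟨Finset.mem_univ i, hc⟩)
      exact dA_eq_zero X this
    simp only [drop]
    rw [Finset.sum_sigma', Finset.sum_sigma']
    refine Finset.sum_nbij' (fun p => ⟨insert p.2 p.1, p.2⟩) (fun p => ⟨p.1.erase p.2, p.2⟩)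
      ?_ ?_ ?_ ?_ ?_
    · rintro ⟨S, i⟩ hp
      simp only [Finset.mem_sigma, Finset.mem_powersetCard_univ, Finset.mem_sdiff] at hp ⊢
      exact ⟨by rw [Finset.card_insert_of_notMem hp.2.2, hp.1], Finset.mem_insert_self _ _⟩
    · rintro ⟨T, i⟩ hp
      simp only [Finset.mem_sigma, Finset.mem_powersetCard_univ, Finset.mem_sdiff] at hp ⊢
      exact ⟨by simp [Finset.card_erase_of_mem hp.2, hp.1], Finset.mem_univ i,
        Finset.notMem_erase i T⟩
    · rintro ⟨S, i⟩ hp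
      simp only [Finset.mem_sigma, Finset.mem_powersetCard_univ, Finset.mem_sdiff] at hp
      simp [Finset.erase_insert hp.2.2]
    · rintro ⟨T, i⟩ hp
      simp only [Finset.mem_sigma, Finset.mem_powersetCard_univ, Finset.mem_sdiff] at hp
      simp [Finset.insert_erase hp.2]
    · rintro ⟨S, i⟩ hp
      simp only [Finset.mem_sigma, Finset.mem_powersetCard_univ, Finset.mem_sdiff] at hp
      simp [Finset.erase_insert hp.2.2]
  rw [step2]
  -- Step 3: for each T, the inner sum telescopes to the maximal minor of T.
  refine (Finset.sum_congr rfl fun T hT => ?_).symm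
  have hcard : T.card = k + 1 := (Finset.mem_powersetCard.mp hT).2
  rw [dif_pos hcard]
  have reindex : ∑ i ∈ T, dA X (T.erase i) i
      = ∑ m : Fin (k+1), dA X (T.erase (T.orderEmbOfFin hcard m)) (T.orderEmbOfFin hcard m) := by
    refine (Finset.sum_nbij' (fun m => T.orderEmbOfFin hcard m)
      (fun i => if hi : i ∈ T then (T.orderIsoOfFin hcard).symm ⟨i, hi⟩ else 0)
      ?_ ?_ ?_ ?_ ?_).symm
    · intro m _; exact T.orderEmbOfFin_mem hcard m
    · intro i _; exact Finset.mem_univ _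
    · intro m _
      rw [dif_pos (T.orderEmbOfFin_mem hcard m)]
      have h2 : (⟨T.orderEmbOfFin hcard m, T.orderEmbOfFin_mem hcard m⟩ : {x // x ∈ T})
          = T.orderIsoOfFin hcard m :=
        Subtype.ext (Finset.coe_orderIsoOfFin_apply T hcard m).symm
      rw [h2, OrderIso.symm_apply_apply]
    · intro i hi
      rw [dif_pos hi, ← Finset.coe_orderIsoOfFin_apply, OrderIso.apply_symm_apply]
    · intro m _; rfl
  rw [reindex]
  simp only [dA_erase X hcard]
  rw [← Finset.sum_mul]
  have : ∑ m : Fin (k+1), (-1 : R) ^ (m : ℕ) = 1 := by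
    rw [Fin.sum_univ_eq_sum_range, neg_one_geom_sum, if_neg (by simp [Nat.even_add_one, hk])]
  rw [this, one_mul]
end

section
/- If all column sums of the (n+1)×(k+1) matrix X equal 1, then the matrix rational parity satisfies Σ_{j=0}^{k} (-1)^j s(δⱼ*X) = s(X) when k+1 is odd, and Σ_{j=0}^{k} (-1)^j s(δⱼ*X) = 0 when k+1 is even, where s denotes the sum of maximal minors. -/
/-!
Fix a `k`-set `S` of rows. Laplace expansion along an added top row of ones turns
`∑ⱼ (-1)^j det (δⱼ*X)_S` into the determinant of `X_S` bordered by that row. As the columns of `X`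
sum to `1`, the row of ones is `∑ᵢ Xᵢ`, so this is `∑ᵢ det [Xᵢ; X_S]`, and the terms with `i ∈ S`
vanish. The pairs `(S, i)` with `i ∉ S` are the pairs `(T, i)` with `#T = k + 1` and `i ∈ T`;
moving row `i` from the top to its sorted position `r` in `T` costs the sign `(-1)^r`. Hence the
sum is `(∑_{r ≤ k} (-1)^r) · s(X)`.
-/

open Finset Matrix

section DoubleCounting

variable {α M : Type*} [Fintype α] [DecidableEq α] [AddCommMonoid M]

theorem Finset.sum_powersetCard_sum_compl (k : ℕ) (f : Finset α → α → M) :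
    ∑ S ∈ univ.powersetCard k, ∑ i ∈ Sᶜ, f S i
      = ∑ T ∈ univ.powersetCard (k + 1), ∑ i ∈ T, f (T.erase i) i := by
  rw [sum_sigma', sum_sigma']
  refine sum_nbij' (fun p => ⟨insert p.2 p.1, p.2⟩) (fun p => ⟨p.1.erase p.2, p.2⟩)
    ?_ ?_ ?_ ?_ ?_
  · rintro ⟨S, i⟩ h
    simp only [mem_sigma, mem_powersetCard_univ, mem_compl] at h ⊢
    exact ⟨by rw [card_insert_of_notMem h.2, h.1], mem_insert_self i S⟩
  · rintro ⟨T, i⟩ h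
    simp only [mem_sigma, mem_powersetCard_univ, mem_compl] at h ⊢
    exact ⟨by rw [card_erase_of_mem h.2, h.1, Nat.add_sub_cancel], notMem_erase i T⟩
  · rintro ⟨S, i⟩ h
    simp only [mem_sigma, mem_compl] at h
    simp [erase_insert h.2]
  · rintro ⟨T, i⟩ h
    simp only [mem_sigma] at h
    simp [insert_erase h.2]
  · rintro ⟨S, i⟩ h
    simp only [mem_sigma, mem_compl] at h
    simp [erase_insert h.2]

end DoubleCounting

theorem Finset.orderEmbOfFin_erase {α : Type*} [LinearOrder α] {T : Finset α} {k : ℕ}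
    (hT : T.card = k + 1) (r : Fin (k + 1)) (h : (T.erase (T.orderEmbOfFin hT r)).card = k) :
    ⇑((T.erase (T.orderEmbOfFin hT r)).orderEmbOfFin h) = T.orderEmbOfFin hT ∘ r.succAbove := by
  refine (orderEmbOfFin_unique h (fun a => mem_erase.mpr ⟨?_, orderEmbOfFin_mem T hT _⟩)
    ((T.orderEmbOfFin hT).strictMono.comp (Fin.strictMono_succAbove r))).symm
  exact fun h => Fin.succAbove_ne r a ((T.orderEmbOfFin hT).injective h)

section Determinants

variable {ι R : Type*} [CommRing R] {k : ℕ}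

theorem Matrix.det_submatrix_cons_succAbove (Y : Matrix (Fin (k + 1)) (Fin (k + 1)) R)
    (r : Fin (k + 1)) :
    det (Y.submatrix (Fin.cons r r.succAbove) id) = (-1) ^ (r : ℕ) * det Y := by
  have : (Fin.cons r r.succAbove : Fin (k + 1) → Fin (k + 1)) = r.cycleRange.symm := by
    ext a
    cases a using Fin.cases <;> simp [Fin.cycleRange_symm_zero, Fin.cycleRange_symm_succ]
  rw [this, det_permute, Equiv.Perm.sign_symm, Fin.sign_cycleRange]
  push_cast
  rfl

theorem Matrix.det_submatrix_cons_of_mem_range (X : Matrix ι (Fin (k + 1)) R)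
    {e : Fin k → ι} {i : ι} (hi : i ∈ Set.range e) :
    det (X.submatrix (Fin.cons i e) id) = 0 := by
  obtain ⟨a, rfl⟩ := hi
  exact det_zero_of_row_eq (Fin.succ_ne_zero a).symm rfl

theorem Matrix.sum_det_submatrix_cons_of_col_sum_eq_one [Fintype ι] (X : Matrix ι (Fin (k + 1)) R)
    (hcol : ∀ j, ∑ i, X i j = 1) (e : Fin k → ι) :
    ∑ i, det (X.submatrix (Fin.cons i e) id)
      = ∑ j : Fin (k + 1), (-1) ^ (j : ℕ) * det (X.submatrix e j.succAbove) := by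
  simp_rw [det_succ_row_zero]
  rw [sum_comm]
  refine sum_congr rfl fun j _ => ?_
  simp [← sum_mul, ← mul_sum, hcol]

end Determinants

section MaximalMinors

variable {R : Type*} [CommRing R] {N k : ℕ} (X : Matrix (Fin N) (Fin (k + 1)) R)

noncomputable def consMinor (S : Finset (Fin N)) (i : Fin N) : R :=
  if h : S.card = k then det (X.submatrix (Fin.cons i (S.orderEmbOfFin h)) id) else 0

theorem sum_det_submatrix_cons_orderEmbOfFin {S : Finset (Fin N)} (hS : S.card = k) :
    ∑ i, det (X.submatrix (Fin.cons i (S.orderEmbOfFin hS)) id) = ∑ i ∈ Sᶜ, consMinor X S i := by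
  refine (sum_subset (subset_univ _) fun i _ hi => ?_).symm.trans
    (sum_congr rfl fun i _ => by rw [consMinor, dif_pos hS])
  refine det_submatrix_cons_of_mem_range X ?_
  rw [range_orderEmbOfFin]
  simpa using hi

theorem sum_consMinor_erase {T : Finset (Fin N)} (hT : T.card = k + 1) :
    ∑ i ∈ T, consMinor X (T.erase i) i
      = (∑ r : Fin (k + 1), (-1) ^ (r : ℕ)) * det (X.submatrix (T.orderEmbOfFin hT) id) := by
  have hsum := sum_map univ (T.orderEmbOfFin hT).toEmbedding fun i => consMinor X (T.erase i) i
  simp only [map_orderEmbOfFin_univ, RelEmbedding.coe_toEmbedding] at hsum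
  set t := T.orderEmbOfFin hT
  rw [hsum, sum_mul]
  refine sum_congr rfl fun r _ => ?_
  have hcard : (T.erase (t r)).card = k := by
    rw [card_erase_of_mem (orderEmbOfFin_mem T hT r), hT, Nat.add_sub_cancel]
  rw [← det_submatrix_cons_succAbove, submatrix_submatrix, Fin.comp_cons, consMinor, dif_pos hcard,
    orderEmbOfFin_erase hT r hcard]
  rfl

end MaximalMinors

theorem minorSum_alternating_delCol_general (n k : ℕ)
    (X : Matrix (Fin (n + 1)) (Fin (k + 1)) ℝ) (hcol : ∀ j, ∑ i, X i j = 1) :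
    ∑ j : Fin (k + 1), (-1) ^ (j : ℕ) * minorSum (delCol X j)
      = if Even k then minorSum X else 0 := by
  calc ∑ j : Fin (k + 1), (-1) ^ (j : ℕ) * minorSum (delCol X j)
      = ∑ S ∈ (univ.powersetCard k).attach, ∑ j : Fin (k + 1), (-1) ^ (j : ℕ) *
          det (X.submatrix (S.1.orderEmbOfFin (mem_powersetCard.mp S.2).2) j.succAbove) := by
        simp_rw [minorSum, mul_sum]
        exact sum_comm
    _ = ∑ S ∈ (univ.powersetCard k).attach, ∑ i ∈ S.1ᶜ, consMinor X S.1 i :=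
        sum_congr rfl fun S _ => by
          rw [← sum_det_submatrix_cons_of_col_sum_eq_one X hcol,
            sum_det_submatrix_cons_orderEmbOfFin]
    _ = ∑ T ∈ univ.powersetCard (k + 1), ∑ i ∈ T, consMinor X (T.erase i) i := by
        rw [sum_attach _ fun S => ∑ i ∈ Sᶜ, consMinor X S i, sum_powersetCard_sum_compl]
    _ = ∑ T ∈ (univ.powersetCard (k + 1)).attach, (∑ r : Fin (k + 1), (-1) ^ (r : ℕ)) *
          det (X.submatrix (T.1.orderEmbOfFin (mem_powersetCard.mp T.2).2) id) := by
        rw [← sum_attach]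
        exact sum_congr rfl fun T _ => sum_consMinor_erase X _
    _ = (∑ r : Fin (k + 1), (-1) ^ (r : ℕ)) * minorSum X := (mul_sum _ _ _).symm
    _ = if Even k then minorSum X else 0 := by
        rw [Fin.sum_neg_one_pow]
        by_cases hk : Even k <;> simp [hk, Nat.even_add_one]

/-- If every column of the `(n+1)×(k+1)` real matrix `X` sums to `1`, then
`Σⱼ (-1)^j s(δⱼ*X)` equals `s(X)` when `k+1` is odd and `0` when `k+1` is even. -/
theorem minorSum_alternating_delCol (n k : ℕ) (hkn : k ≤ n)
    (X : Matrix (Fin (n + 1)) (Fin (k + 1)) ℝ) (hcol : ∀ j, ∑ i, X i j = 1) :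
    ∑ j : Fin (k + 1), (-1) ^ (j : ℕ) * minorSum (delCol X j)
      = if Even k then minorSum X else 0 :=
  minorSum_alternating_delCol_general n k X hcol
end

section
/- The 2-form ω_n = -Σ_{0 ≤ i < j ≤ n} dl_i ∧ dl_j on the n-simplex (with barycentric coordinates l₀,...,l_n summing to 1) is invariant under cyclic permutation of barycentric coordinates: |τₙ|*ω_n = ω_n, where |τₙ|(l₀,...,l_n) = (l_n, l₀, ..., l_{n-1}). -/
/-- The 2-form `ω_n = -Σ_{i<j} dl_i ∧ dl_j` evaluated on a pair of tangent vectors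
`u, v` to the `n`-simplex (vectors in `ℝ^{n+1}` with coordinate sum `0`, where
`dl_i` reads off the `i`-th coordinate). -/
def omegaForm (n : ℕ) (u v : Fin (n + 1) → ℝ) : ℝ :=
  -∑ p ∈ Finset.univ.filter (fun p : Fin (n + 1) × Fin (n + 1) => p.1 < p.2),
    (u p.1 * v p.2 - v p.1 * u p.2)

/-- The 2-form `ω_n = -Σ_{i<j} dl_i ∧ dl_j` on the `n`-simplex is invariant under the
cyclic permutation of barycentric coordinates `|τₙ|(l₀,…,lₙ) = (lₙ,l₀,…,l_{n-1})`:
its pullback under this affine map (whose linear part permutes the coordinates of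
tangent vectors, which are the sum-zero vectors) equals `ω_n`. -/
theorem omegaForm_cyclic_invariant (n : ℕ) (u v : Fin (n + 1) → ℝ)
    (hu : ∑ i, u i = 0) (hv : ∑ i, v i = 0) :
    omegaForm n (fun j => u (j - 1)) (fun j => v (j - 1)) = omegaForm n u v := by
  set g : Fin (n+1) → Fin (n+1) → ℝ := fun a b => u a * v b - v a * u b with hg
  -- the column sum at `last n` vanishes
  have hcol : ∑ a : Fin (n+1), g a (Fin.last n) = 0 := by
    simp only [hg]
    rw [Finset.sum_sub_distrib, ← Finset.sum_mul, ← Finset.sum_mul, hu, hv]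
    ring
  have hcol' : ∑ a : Fin n, g a.castSucc (Fin.last n) = 0 := by
    have := Fin.sum_univ_castSucc (fun a : Fin (n+1) => g a (Fin.last n))
    rw [hcol] at this
    have hlast : g (Fin.last n) (Fin.last n) = 0 := by simp [hg]; ring
    linarith [this, hlast]
  unfold omegaForm
  congr 1
  -- rewrite the LHS using the shift equivalence
  have key : (∑ p ∈ Finset.univ.filter (fun p : Fin (n+1) × Fin (n+1) => p.1 < p.2),
      (u (p.1 - 1) * v (p.2 - 1) - v (p.1 - 1) * u (p.2 - 1)))
      = ∑ p : Fin (n+1) × Fin (n+1),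
          if p.1 + 1 < p.2 + 1 then g p.1 p.2 else 0 := by
    rw [Finset.sum_filter]
    rw [← Equiv.sum_comp ((Equiv.addRight (1 : Fin (n+1))).prodCongr
          (Equiv.addRight (1 : Fin (n+1))))]
    exact Finset.sum_congr rfl fun p _ => by
      simp [Equiv.prodCongr, hg, add_sub_cancel_right]
  rw [key, Finset.sum_filter]
  rw [← sub_eq_zero, ← Finset.sum_sub_distrib]
  rw [Fintype.sum_prod_type]
  -- pointwise helpers
  have hval : ∀ a : Fin n, ((a.castSucc : Fin (n+1)) + 1).val = a.val + 1 :=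
    fun a => Fin.val_add_one_of_lt (Fin.castSucc_lt_last a)
  have hlast1 : (Fin.last n : Fin (n+1)) + 1 = 0 := by
    ext; simp [Fin.add_def]
  rw [Fin.sum_univ_castSucc (fun a : Fin (n+1) => ∑ b : Fin (n+1),
      ((if a + 1 < b + 1 then g a b else 0) - (if a < b then g a b else 0)))]
  have h1 : ∀ a : Fin n, (∑ b : Fin (n+1),
      ((if a.castSucc + 1 < b + 1 then g a.castSucc b else 0)
        - (if a.castSucc < b then g a.castSucc b else 0)))
      = - g a.castSucc (Fin.last n) := by
    intro a
    rw [Fin.sum_univ_castSucc]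
    have hz : ∀ b : Fin n,
        ((if a.castSucc + 1 < b.castSucc + 1 then g a.castSucc b.castSucc else 0)
          - (if a.castSucc < b.castSucc then g a.castSucc b.castSucc else 0)) = 0 := by
      intro b
      have : (a.castSucc + 1 < b.castSucc + 1) ↔ (a.castSucc < b.castSucc) := by
        simp only [Fin.lt_def, hval a, hval b, Fin.coe_castSucc]
        omega
      rw [if_congr this rfl rfl]
      ring
    rw [Finset.sum_congr rfl (fun b _ => hz b), Finset.sum_const_zero, zero_add]
    rw [hlast1]
    have h2 : ¬ (a.castSucc + 1 < (0 : Fin (n+1))) := by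
      simp [Fin.lt_def]
    rw [if_neg h2, if_pos (Fin.castSucc_lt_last a)]
    ring
  rw [Finset.sum_congr rfl (fun a _ => h1 a)]
  have h3 : (∑ b : Fin (n+1),
      ((if (Fin.last n) + 1 < b + 1 then g (Fin.last n) b else 0)
        - (if (Fin.last n) < b then g (Fin.last n) b else 0)))
      = ∑ b : Fin n, g (Fin.last n) b.castSucc := by
    rw [Fin.sum_univ_castSucc]
    have hz : ∀ b : Fin n,
        ((if (Fin.last n) + 1 < b.castSucc + 1 then g (Fin.last n) b.castSucc else 0)
          - (if (Fin.last n) < b.castSucc then g (Fin.last n) b.castSucc else 0))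
          = g (Fin.last n) b.castSucc := by
      intro b
      rw [hlast1]
      have hp : (0 : Fin (n+1)) < b.castSucc + 1 := by
        rw [Fin.lt_def, hval b]; simp
      rw [if_pos hp, if_neg (Fin.not_lt.mpr (Fin.castSucc_lt_last b).le)]
      ring
    rw [Finset.sum_congr rfl (fun b _ => hz b)]
    rw [hlast1]
    simp [Fin.lt_def]
  rw [h3]
  have h4 : ∀ b : Fin n, g (Fin.last n) b.castSucc = - g b.castSucc (Fin.last n) := by
    intro b; simp [hg]; ring
  rw [Finset.sum_congr rfl (fun b _ => h4 b)]
  rw [Finset.sum_neg_distrib, hcol']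
  ring
end

section
/- The 1-form α_n = -dx - Σ_{0 ≤ i < j ≤ n} l_i dl_j on 𝕋 × Δⁿ is invariant under the cyclic gauge transformation T(τₙ)(x | l₀,...,l_n) = (x - S₁(l) mod 1 | l_n, l₀, ..., l_{n-1}) where S₁(l) = l₀: i.e., the pullback of α_n under the map (x, l) ↦ (x - Σ_{a<1} l_a, |τₙ|(l))—more generally under T(τₙⁱ)(x|l) = (x - Σ_{a=0}^{i-1} l_a | l cyclically shifted by i)—equals α_n. -/
/-- The connection 1-form `α_n = -dx - Σ_{i<j} l_i dl_j` on `𝕋 × Δⁿ`, evaluated at the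
point with barycentric coordinates `l` on a tangent vector with fiber component `ξ`
and base component `u` (a sum-zero vector, `dl_i` reading the `i`-th coordinate). -/
def alphaVal (n : ℕ) (l : Fin (n + 1) → ℝ) (ξ : ℝ) (u : Fin (n + 1) → ℝ) : ℝ :=
  -ξ - ∑ p ∈ Finset.univ.filter (fun p : Fin (n + 1) × Fin (n + 1) => p.1 < p.2),
    l p.1 * u p.2

/-!
Write `F(l, u) = Σ_{p<q} l_p u_q`, so that `α_n = -dx - F(l, dl)`. Rotating both arguments
by one place moves index `0` to the end, which changes `F` by `(Σ l) u₀ - l₀ (Σ u)`; on the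
simplex (`Σ l = 1`, `Σ dl = 0`) this is `u₀ = dl₀`. Iterating, rotation by `i` adds
`Σ_{a<i} dl_a` to `F(l, dl)`, which is exactly what the fiber shift by `-Σ_{a<i} l_a` subtracts
from `dx`.
-/

open Finset

namespace Fin

variable {R : Type*} [CommRing R]

def lowerPairSum {m : ℕ} (l u : Fin m → R) : R :=
  ∑ p ∈ univ.filter (fun p : Fin m × Fin m => p.1 < p.2), l p.1 * u p.2

theorem lowerPairSum_eq_sum_sum {m : ℕ} (l u : Fin m → R) :
    lowerPairSum l u = ∑ p, ∑ q, if p < q then l p * u q else 0 := by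
  rw [lowerPairSum, sum_filter, Fintype.sum_prod_type]

theorem lowerPairSum_succ {m : ℕ} (l u : Fin (m + 1) → R) :
    lowerPairSum l u =
      l 0 * ∑ q : Fin m, u q.succ + lowerPairSum (fun p => l p.succ) (fun q => u q.succ) := by
  simp only [lowerPairSum_eq_sum_sum, sum_univ_succ, succ_lt_succ_iff, succ_pos, not_lt_zero,
    if_true, if_false, zero_add, mul_sum]

theorem lowerPairSum_castSucc {m : ℕ} (l u : Fin (m + 1) → R) :
    lowerPairSum l u =
      lowerPairSum (fun p => l p.castSucc) (fun q => u q.castSucc)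
        + (∑ p : Fin m, l p.castSucc) * u (last m) := by
  simp [lowerPairSum_eq_sum_sum, sum_univ_castSucc, castSucc_lt_last, not_lt.2 (le_last _),
    sum_mul, sum_add_distrib]

theorem lowerPairSum_comp_add_one {n : ℕ} (l u : Fin (n + 1) → R) :
    lowerPairSum (fun j => l (j + 1)) (fun j => u (j + 1)) =
      lowerPairSum l u + (∑ j, l j) * u 0 - l 0 * ∑ j, u j := by
  have hrotate : ∀ f : Fin (n + 1) → R,
      (fun p : Fin n => f (p.castSucc + 1)) = fun p => f p.succ := fun f => by
    simp only [coeSucc_eq_succ]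
  rw [lowerPairSum_castSucc, hrotate l, hrotate u, last_add_one, lowerPairSum_succ l u,
    sum_univ_succ l, sum_univ_succ u]
  ring

open Fin.NatCast in
theorem lowerPairSum_comp_add_natCast {n : ℕ} (l u : Fin (n + 1) → R) (i : ℕ) :
    lowerPairSum (fun j => l (j + (i : Fin (n + 1)))) (fun j => u (j + (i : Fin (n + 1)))) =
      lowerPairSum l u + ∑ a ∈ range i, ((∑ j, l j) * u a - l a * ∑ j, u j) := by
  induction i with
  | zero => simp
  | succ i ih =>
    have hshift : ∀ j : Fin (n + 1), j + ((i + 1 : ℕ) : Fin (n + 1)) = j + 1 + i := fun j => by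
      rw [Nat.cast_succ, add_right_comm, add_assoc]
    have hsum : ∀ f : Fin (n + 1) → R, ∑ j, f (j + (i : Fin (n + 1))) = ∑ j, f j :=
      fun f => Equiv.sum_comp (Equiv.addRight (i : Fin (n + 1))) f
    simp only [hshift]
    rw [lowerPairSum_comp_add_one (fun j => l (j + (i : Fin (n + 1))))
      (fun j => u (j + (i : Fin (n + 1)))), ih, hsum, hsum, sum_range_succ, zero_add]
    ring

end Fin

theorem alphaVal_eq_neg_sub_lowerPairSum (n : ℕ) (l : Fin (n + 1) → ℝ) (ξ : ℝ)
    (u : Fin (n + 1) → ℝ) : alphaVal n l ξ u = -ξ - Fin.lowerPairSum l u :=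
  rfl

open Fin.NatCast

/- The differential of `T(τₙⁱ)` sends the tangent vector `(ξ, u)` at `(x, l)` to
`(ξ - Σ_{a<i} u_a, u shifted by i)`. -/
theorem alpha_cyclic_invariant_general (n : ℕ) (i : ℕ)
    (l u : Fin (n + 1) → ℝ) (hl : ∑ a, l a = 1) (hu : ∑ a, u a = 0) (ξ : ℝ) :
    alphaVal n (fun j => l (j + (i : Fin (n + 1))))
        (ξ - ∑ a ∈ Finset.range i, u ((a : ℕ) : Fin (n + 1)))
        (fun j => u (j + (i : Fin (n + 1))))
      = alphaVal n l ξ u := by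
  rw [alphaVal_eq_neg_sub_lowerPairSum, alphaVal_eq_neg_sub_lowerPairSum,
    Fin.lowerPairSum_comp_add_natCast, hl, hu]
  simp only [one_mul, mul_zero, sub_zero]
  ring

/-- Invariance of `α_n` under the cyclic gauge transformation `T(τₙⁱ)`: the map sending
`(x | l)` to `(x - Σ_{a<i} l_a | l cyclically shifted by i)` (so the section through
`Σ_{a<i} l_a` becomes the zero section and the new `j`-th barycentric coordinate is
`l_{j+i}`).  Its differential sends the tangent vector `(ξ, u)` at `(x,l)` to
`(ξ - Σ_{a<i} u_a, u shifted)`, and the pullback of `α_n` equals `α_n`. -/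
theorem alpha_cyclic_invariant (n : ℕ) (i : ℕ) (hi : i ≤ n)
    (l u : Fin (n + 1) → ℝ) (hl : ∑ a, l a = 1) (hu : ∑ a, u a = 0) (ξ : ℝ) :
    alphaVal n (fun j => l (j + (i : Fin (n + 1))))
        (ξ - ∑ a ∈ Finset.range i, u ((a : ℕ) : Fin (n + 1)))
        (fun j => u (j + (i : Fin (n + 1))))
      = alphaVal n l ξ u :=
  alpha_cyclic_invariant_general n i l u hl hu ξ
end

section
/- Let w : Fin (n+1) → Fin (k+1) be a surjective word with k odd (so k+1 is even), and assign to w the rational parity P(w) (the average sign of its proper subwords). Then the alternating sum over letters of the parities of the letter-deleted subwords vanishes: Σ_{j=0}^{k} (-1)^j P(δⱼ*w) = 0, where δⱼ*w is the word obtained from w by deleting all occurrences of letter j (and monotonically relabeling letters > j down by one). -/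
open Finset


/-- The order-preserving relabeling `Fin (2m+2) \ {j} ≃ Fin (2m+1)`:
letters below `j` keep their value, letters above `j` drop by one. -/
def relabel (m : ℕ) (j : Fin (2 * m + 2)) (i : Fin (2 * m + 2)) : Fin (2 * m + 1) :=
  if h : (i : ℕ) < (j : ℕ) then
    ⟨i, by have := j.is_lt; omega⟩
  else
    ⟨(i : ℕ) - 1, by have := i.is_lt; omega⟩

/-- `delWord w j`: the word obtained from `w` by deleting all occurrences of the letter
`j` (keeping the remaining positions in increasing order) and monotonically relabeling
the remaining letters. -/
def delWord {n m : ℕ} (w : Fin (n + 1) → Fin (2 * m + 2)) (j : Fin (2 * m + 2)) :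
    Fin ((Finset.univ.filter fun i => w i ≠ j).card) → Fin (2 * m + 1) :=
  fun a => relabel m j
    (w ((Finset.univ.filter fun i => w i ≠ j).orderEmbOfFin rfl a))

def unrel (m : ℕ) (j : Fin (2 * m + 2)) (l : Fin (2 * m + 1)) : Fin (2 * m + 2) :=
  if (l : ℕ) < (j : ℕ) then ⟨l, by omega⟩ else ⟨(l : ℕ) + 1, by omega⟩

lemma unrel_val (m : ℕ) (j : Fin (2*m+2)) (l : Fin (2*m+1)) :
    (unrel m j l : ℕ) = if (l : ℕ) < (j : ℕ) then (l : ℕ) else (l : ℕ) + 1 := by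
  unfold unrel; split_ifs <;> rfl

lemma relabel_val (m : ℕ) (j i : Fin (2*m+2)) :
    (relabel m j i : ℕ) = if (i : ℕ) < (j : ℕ) then (i : ℕ) else (i : ℕ) - 1 := by
  unfold relabel; split_ifs <;> rfl

lemma unrel_ne (m : ℕ) (j : Fin (2*m+2)) (l : Fin (2*m+1)) : unrel m j l ≠ j := by
  rw [Ne, Fin.ext_iff, unrel_val]
  split_ifs <;> omega

lemma relabel_unrel (m : ℕ) (j : Fin (2*m+2)) (l : Fin (2*m+1)) :
    relabel m j (unrel m j l) = l := by
  rw [Fin.ext_iff, relabel_val, unrel_val]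
  split_ifs <;> omega

lemma unrel_relabel (m : ℕ) {j i : Fin (2*m+2)} (h : i ≠ j) :
    unrel m j (relabel m j i) = i := by
  have hv : (i : ℕ) ≠ (j : ℕ) := fun h' => h (Fin.ext h')
  rw [Fin.ext_iff, unrel_val, relabel_val]
  split_ifs <;> omega

lemma unrel_lt_iff (m : ℕ) (j : Fin (2*m+2)) {l₁ l₂ : Fin (2*m+1)} :
    unrel m j l₁ < unrel m j l₂ ↔ l₁ < l₂ := by
  rw [Fin.lt_def, Fin.lt_def, unrel_val, unrel_val]
  split_ifs <;> omega

lemma card_filter_lt_fin {K : ℕ} (j : Fin K) :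
    (univ.filter fun i : Fin K => i < j).card = (j : ℕ) := by
  have h : (univ.filter fun i : Fin K => i < j) = Iio j := by
    ext i; simp
  rw [h, Fin.card_Iio]

lemma rank_split {K N : ℕ} {s : Fin K → Fin N} (hinj : Function.Injective s) (j : Fin K) :
    (j : ℕ) + (univ.filter fun i => s i < s j).card
    = 2 * (univ.filter fun i : Fin K => i < j ∧ s i < s j).card
      + ((univ.filter fun i : Fin K => i < j ∧ s j < s i).card
        + (univ.filter fun i : Fin K => j < i ∧ s i < s j).card) := by
  have e1 := card_filter_add_card_filter_not
    (s := univ.filter fun i : Fin K => i < j) (p := fun i => s i < s j)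
  have e2 := card_filter_add_card_filter_not
    (s := univ.filter fun i : Fin K => s i < s j) (p := fun i => i < j)
  rw [filter_filter, filter_filter, card_filter_lt_fin] at e1
  rw [filter_filter, filter_filter] at e2
  have h1 : (univ.filter fun i : Fin K => i < j ∧ ¬ s i < s j)
      = univ.filter fun i : Fin K => i < j ∧ s j < s i := by
    ext i
    simp only [mem_filter, mem_univ, true_and, and_congr_right_iff]
    intro hij
    have : s i ≠ s j := fun h => (Fin.ne_of_lt hij) (hinj h)
    constructor
    · intro h; exact lt_of_le_of_ne (not_lt.mp h) this.symm
    · intro h; exact not_lt.mpr (le_of_lt h)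
  have h2 : (univ.filter fun i : Fin K => s i < s j ∧ ¬ i < j)
      = univ.filter fun i : Fin K => j < i ∧ s i < s j := by
    ext i
    simp only [mem_filter, mem_univ, true_and]
    constructor
    · rintro ⟨hs, hn⟩
      have : i ≠ j := fun h => absurd (h ▸ hs) (lt_irrefl _)
      exact ⟨lt_of_le_of_ne (not_lt.mp hn) (Ne.symm this), hs⟩
    · rintro ⟨hj, hs⟩; exact ⟨hs, not_lt.mpr (le_of_lt hj)⟩
  rw [h1] at e1
  rw [h2] at e2
  have hc : (univ.filter fun i : Fin K => s i < s j ∧ i < j)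
      = univ.filter fun i : Fin K => i < j ∧ s i < s j := by
    ext i; simp [and_comm]
  rw [hc] at e2
  omega

lemma inv_split {K N : ℕ} (s : Fin K → Fin N) (j : Fin K) :
    (univ.filter fun p : Fin K × Fin K => p.1 < p.2 ∧ s p.2 < s p.1).card
    = (univ.filter fun p : Fin K × Fin K =>
        (p.1 < p.2 ∧ s p.2 < s p.1) ∧ p.1 ≠ j ∧ p.2 ≠ j).card
      + ((univ.filter fun i : Fin K => i < j ∧ s j < s i).card
        + (univ.filter fun i : Fin K => j < i ∧ s i < s j).card) := by
  have e1 := card_filter_add_card_filter_not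
    (s := univ.filter fun p : Fin K × Fin K => p.1 < p.2 ∧ s p.2 < s p.1)
    (p := fun p => p.1 ≠ j ∧ p.2 ≠ j)
  rw [filter_filter, filter_filter] at e1
  have h2 : (univ.filter fun p : Fin K × Fin K =>
        (p.1 < p.2 ∧ s p.2 < s p.1) ∧ ¬(p.1 ≠ j ∧ p.2 ≠ j))
      = ((univ.filter fun i : Fin K => i < j ∧ s j < s i) ×ˢ {j})
        ∪ ({j} ×ˢ (univ.filter fun i : Fin K => j < i ∧ s i < s j)) := by
    ext ⟨p1, p2⟩
    simp only [mem_filter, mem_univ, true_and, mem_union, mem_product, mem_singleton,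
      not_and_or, not_not]
    constructor
    · rintro ⟨⟨hlt, hs⟩, hor⟩
      rcases hor with h1 | h2
      · subst h1; right; exact ⟨rfl, hlt, hs⟩
      · subst h2; left; exact ⟨⟨hlt, hs⟩, rfl⟩
    · rintro (⟨⟨hlt, hs⟩, h2⟩ | ⟨h1, hlt, hs⟩)
      · subst h2; exact ⟨⟨hlt, hs⟩, Or.inr rfl⟩
      · subst h1; exact ⟨⟨hlt, hs⟩, Or.inl rfl⟩
  have hdisj : Disjoint
      ((univ.filter fun i : Fin K => i < j ∧ s j < s i) ×ˢ ({j} : Finset (Fin K)))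
      (({j} : Finset (Fin K)) ×ˢ (univ.filter fun i : Fin K => j < i ∧ s i < s j)) := by
    rw [disjoint_left]
    rintro ⟨p1, p2⟩ hmem hmem'
    simp only [mem_product, mem_singleton, mem_filter, mem_univ, true_and] at hmem hmem'
    obtain ⟨⟨hp1, -⟩, hp2⟩ := hmem
    obtain ⟨hp1', -⟩ := hmem'
    subst hp1'; subst hp2
    exact absurd hp1 (lt_irrefl _)
  rw [h2, card_union_of_disjoint hdisj, card_product, card_product, card_singleton,
    one_mul, mul_one] at e1
  omega

lemma sum_range_neg_one_pow (M : ℕ) : ∑ i ∈ Finset.range (2*M), (-1:ℚ)^i = 0 := by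
  induction M with
  | zero => simp
  | succ M ih =>
    have h : 2*(M+1) = (2*M + 1) + 1 := by ring
    rw [h, Finset.sum_range_succ, Finset.sum_range_succ, ih, pow_succ]
    ring

lemma rank_lt {K N : ℕ} (s : Fin K → Fin N) (j : Fin K) :
    (univ.filter fun i => s i < s j).card < K := by
  have hss : (univ.filter fun i : Fin K => s i < s j) ⊂ univ := by
    refine (Finset.ssubset_iff_of_subset (Finset.subset_univ _)).mpr ?_
    exact ⟨j, mem_univ j, by simp⟩
  calc (univ.filter fun i : Fin K => s i < s j).card
      < (univ : Finset (Fin K)).card := Finset.card_lt_card hss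
    _ = K := by rw [card_univ, Fintype.card_fin]

lemma sum_neg_one_pow_rank {m N : ℕ} {s : Fin (2*m+2) → Fin N}
    (hinj : Function.Injective s) :
    ∑ j : Fin (2*m+2), (-1:ℚ)^((univ.filter fun i => s i < s j).card) = 0 := by
  set ρ : Fin (2*m+2) → Fin (2*m+2) :=
    fun j => ⟨(univ.filter fun i => s i < s j).card, rank_lt s j⟩ with hρ
  have hmono : ∀ {i j : Fin (2*m+2)}, s i < s j → ρ i < ρ j := by
    intro i j hij
    have hss : (univ.filter fun x : Fin (2*m+2) => s x < s i)
        ⊂ (univ.filter fun x : Fin (2*m+2) => s x < s j) := by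
      refine (Finset.ssubset_iff_of_subset ?_).mpr ?_
      · intro x hx
        simp only [mem_filter, mem_univ, true_and] at hx ⊢
        exact lt_trans hx hij
      · exact ⟨i, by simp [hij], by simp⟩
    exact Finset.card_lt_card hss
  have hρinj : Function.Injective ρ := by
    intro i j hij
    by_contra hne
    have hsne : s i ≠ s j := fun h => hne (hinj h)
    rcases lt_or_gt_of_ne hsne with h | h
    · exact absurd hij (ne_of_lt (hmono h))
    · exact absurd hij.symm (ne_of_lt (hmono h))
  have hbij : Function.Bijective ρ := Finite.injective_iff_bijective.mp hρinj
  have := Fintype.sum_bijective ρ hbij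
    (fun j => (-1:ℚ)^((univ.filter fun i => s i < s j).card))
    (fun r : Fin (2*m+2) => (-1:ℚ)^(r:ℕ)) (fun j => rfl)
  rw [this, Fin.sum_univ_eq_sum_range]
  have h22 : 2*m+2 = 2*(m+1) := by ring
  rw [h22]
  exact sum_range_neg_one_pow (m+1)

lemma unrel_inj (m : ℕ) (j : Fin (2*m+2)) : Function.Injective (unrel m j) := by
  intro a b h
  by_contra hne
  rcases lt_or_gt_of_ne hne with hlt | hlt
  · exact absurd h (ne_of_lt ((unrel_lt_iff m j).mpr hlt))
  · exact absurd h.symm (ne_of_lt ((unrel_lt_iff m j).mpr hlt))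


variable {n m : ℕ}

def delSec (w : Fin (n+1) → Fin (2*m+2)) (j : Fin (2*m+2))
    (s : Fin (2*m+2) → Fin (n+1)) (hs : ∀ i, w (s i) = i)
    (l : Fin (2*m+1)) : Fin ((Finset.univ.filter fun i => w i ≠ j).card) :=
  ((Finset.univ.filter fun i => w i ≠ j).orderIsoOfFin rfl).symm
    ⟨s (unrel m j l), by
      simp only [mem_filter, mem_univ, true_and, hs]
      exact unrel_ne m j l⟩

lemma emb_delSec (w : Fin (n+1) → Fin (2*m+2)) (j : Fin (2*m+2))
    (s : Fin (2*m+2) → Fin (n+1)) (hs : ∀ i, w (s i) = i) (l : Fin (2*m+1)) :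
    (Finset.univ.filter fun i => w i ≠ j).orderEmbOfFin rfl (delSec w j s hs l)
      = s (unrel m j l) := by
  unfold delSec
  rw [← Finset.coe_orderIsoOfFin_apply, OrderIso.apply_symm_apply]

lemma delSec_mem (w : Fin (n+1) → Fin (2*m+2)) (j : Fin (2*m+2))
    (s : Fin (2*m+2) → Fin (n+1)) (hs : ∀ i, w (s i) = i) (l : Fin (2*m+1)) :
    delWord w j (delSec w j s hs l) = l := by
  unfold delWord
  rw [emb_delSec w j s hs, hs, relabel_unrel]

lemma delSec_lt_iff (w : Fin (n+1) → Fin (2*m+2)) (j : Fin (2*m+2))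
    (s : Fin (2*m+2) → Fin (n+1)) (hs : ∀ i, w (s i) = i) {l₁ l₂ : Fin (2*m+1)} :
    delSec w j s hs l₁ < delSec w j s hs l₂ ↔ s (unrel m j l₁) < s (unrel m j l₂) := by
  unfold delSec
  rw [OrderIso.lt_iff_lt]
  exact Subtype.mk_lt_mk

lemma card_inv_delSec (w : Fin (n+1) → Fin (2*m+2)) (j : Fin (2*m+2))
    (s : Fin (2*m+2) → Fin (n+1)) (hs : ∀ i, w (s i) = i) :
    (univ.filter fun p : Fin (2*m+1) × Fin (2*m+1) =>
        p.1 < p.2 ∧ delSec w j s hs p.2 < delSec w j s hs p.1).card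
    = (univ.filter fun p : Fin (2*m+2) × Fin (2*m+2) =>
        (p.1 < p.2 ∧ s p.2 < s p.1) ∧ p.1 ≠ j ∧ p.2 ≠ j).card := by
  apply card_bij (fun p _ => (unrel m j p.1, unrel m j p.2))
  · intro p hp
    simp only [mem_filter, mem_univ, true_and] at hp ⊢
    exact ⟨⟨(unrel_lt_iff m j).mpr hp.1,
        (delSec_lt_iff w j s hs).mp hp.2⟩, unrel_ne m j _, unrel_ne m j _⟩
  · intro p₁ h₁ p₂ h₂ heq
    have e1 := congrArg Prod.fst heq
    have e2 := congrArg Prod.snd heq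
    simp only at e1 e2
    exact Prod.ext (unrel_inj m j e1) (unrel_inj m j e2)
  · rintro ⟨b₁, b₂⟩ hb
    simp only [mem_filter, mem_univ, true_and] at hb
    obtain ⟨⟨hlt, hsv⟩, hb₁, hb₂⟩ := hb
    refine ⟨(relabel m j b₁, relabel m j b₂), ?_, ?_⟩
    · simp only [mem_filter, mem_univ, true_and]
      constructor
      · rw [← unrel_lt_iff m j, unrel_relabel m hb₁, unrel_relabel m hb₂]
        exact hlt
      · rw [delSec_lt_iff w j s hs, unrel_relabel m hb₁, unrel_relabel m hb₂]
        exact hsv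
    · simp only
      rw [unrel_relabel m hb₁, unrel_relabel m hb₂]


lemma pow_aux (B a b c : ℕ) : ((-1:ℤ))^(B + (b + c) + (2*a + (b + c))) = (-1)^B := by
  have h : B + (b+c) + (2*a+(b+c)) = B + 2*(a+b+c) := by ring
  rw [h, pow_add, pow_mul, neg_one_sq, one_pow, mul_one]

lemma secSign_delSec (w : Fin (n+1) → Fin (2*m+2)) (j : Fin (2*m+2))
    (s : Fin (2*m+2) → Fin (n+1)) (hs : ∀ i, w (s i) = i) :
    secSign (delSec w j s hs)
      = secSign s * (-1)^((j:ℕ) + (univ.filter fun i => s i < s j).card) := by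
  have hinj : Function.Injective s := fun a b h => by rw [← hs a, ← hs b, h]
  simp only [secSign]
  rw [card_inv_delSec w j s hs, ← pow_add, inv_split s j, rank_split hinj j]
  exact (pow_aux _ _ _ _).symm

lemma mem_wordSections_iff {N K : ℕ} {w : Fin N → Fin K} {s : Fin K → Fin N} :
    s ∈ wordSections w ↔ ∀ j, w (s j) = j := by
  simp [wordSections]

def recSec (w : Fin (n+1) → Fin (2*m+2)) (j : Fin (2*m+2))
    (t : Fin (2*m+1) → Fin ((Finset.univ.filter fun i => w i ≠ j).card))
    (x : Fin (n+1)) : Fin (2*m+2) → Fin (n+1) :=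
  fun i => if i = j then x
    else (Finset.univ.filter fun i => w i ≠ j).orderEmbOfFin rfl (t (relabel m j i))

lemma w_emb_t (w : Fin (n+1) → Fin (2*m+2)) (j : Fin (2*m+2))
    (t : Fin (2*m+1) → Fin ((Finset.univ.filter fun i => w i ≠ j).card))
    (ht : ∀ l, delWord w j (t l) = l) (l : Fin (2*m+1)) :
    w ((Finset.univ.filter fun i => w i ≠ j).orderEmbOfFin rfl (t l)) = unrel m j l := by
  have hne : w ((Finset.univ.filter fun i => w i ≠ j).orderEmbOfFin rfl (t l)) ≠ j := by
    have hmem := Finset.orderEmbOfFin_mem (Finset.univ.filter fun i => w i ≠ j) rfl (t l)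
    exact (Finset.mem_filter.mp hmem).2
  have h2 := ht l
  unfold delWord at h2
  have h3 := unrel_relabel m hne
  rw [h2] at h3
  exact h3.symm

lemma recSec_mem (w : Fin (n+1) → Fin (2*m+2)) (j : Fin (2*m+2))
    (t : Fin (2*m+1) → Fin ((Finset.univ.filter fun i => w i ≠ j).card))
    (ht : ∀ l, delWord w j (t l) = l) (x : Fin (n+1)) (hx : w x = j) (i : Fin (2*m+2)) :
    w (recSec w j t x i) = i := by
  unfold recSec
  split_ifs with h
  · rw [hx, h]
  · rw [w_emb_t w j t ht, unrel_relabel m h]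

lemma recSec_delSec (w : Fin (n+1) → Fin (2*m+2)) (j : Fin (2*m+2))
    (s : Fin (2*m+2) → Fin (n+1)) (hs : ∀ i, w (s i) = i) :
    recSec w j (delSec w j s hs) (s j) = s := by
  funext i
  unfold recSec
  split_ifs with h
  · rw [h]
  · rw [emb_delSec w j s hs, unrel_relabel m h]

lemma delSec_recSec (w : Fin (n+1) → Fin (2*m+2)) (j : Fin (2*m+2))
    (t : Fin (2*m+1) → Fin ((Finset.univ.filter fun i => w i ≠ j).card))
    (ht : ∀ l, delWord w j (t l) = l) (x : Fin (n+1)) (hx : w x = j)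
    (hsec : ∀ i, w (recSec w j t x i) = i) :
    delSec w j (recSec w j t x) hsec = t := by
  funext l
  unfold delSec
  have h1 : recSec w j t x (unrel m j l)
      = (Finset.univ.filter fun i => w i ≠ j).orderEmbOfFin rfl (t l) := by
    unfold recSec
    rw [if_neg (unrel_ne m j l), relabel_unrel]
  have h2 : (⟨recSec w j t x (unrel m j l), by
        simp only [mem_filter, mem_univ, true_and, hsec]
        exact unrel_ne m j l⟩ :
        {y // y ∈ (Finset.univ.filter fun i => w i ≠ j)})
      = (Finset.univ.filter fun i => w i ≠ j).orderIsoOfFin rfl (t l) := by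
    apply Subtype.ext
    rw [Finset.coe_orderIsoOfFin_apply]
    exact h1
  rw [h2, OrderIso.symm_apply_apply]

lemma sum_key (w : Fin (n+1) → Fin (2*m+2)) (j : Fin (2*m+2)) :
    ∑ s ∈ wordSections w,
        (secSign s : ℚ) * (-1)^((j:ℕ) + (univ.filter fun i => s i < s j).card)
    = ∑ p ∈ (wordSections (delWord w j)) ×ˢ (univ.filter fun x => w x = j),
        (secSign p.1 : ℚ) := by
  refine Finset.sum_bij'
    (fun s hs => (delSec w j s (mem_wordSections_iff.mp hs), s j))
    (fun p _ => recSec w j p.1 p.2) ?_ ?_ ?_ ?_ ?_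
  · intro s hs
    rw [Finset.mem_product]
    refine ⟨mem_wordSections_iff.mpr (delSec_mem w j s (mem_wordSections_iff.mp hs)), ?_⟩
    simp only [mem_filter, mem_univ, true_and]
    exact mem_wordSections_iff.mp hs j
  · intro p hp
    rw [Finset.mem_product] at hp
    have ht := mem_wordSections_iff.mp hp.1
    have hx : w p.2 = j := by
      have := hp.2; simp only [mem_filter, mem_univ, true_and] at this; exact this
    exact mem_wordSections_iff.mpr (recSec_mem w j p.1 ht p.2 hx)
  · intro s hs
    exact recSec_delSec w j s (mem_wordSections_iff.mp hs)
  · intro p hp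
    rw [Finset.mem_product] at hp
    have ht := mem_wordSections_iff.mp hp.1
    have hx : w p.2 = j := by
      have := hp.2; simp only [mem_filter, mem_univ, true_and] at this; exact this
    refine Prod.ext ?_ ?_
    · exact delSec_recSec w j p.1 ht p.2 hx (fun i => recSec_mem w j p.1 ht p.2 hx i)
    · show (if j = j then p.2 else _) = p.2
      rw [if_pos rfl]
  · intro s hs
    rw [secSign_delSec w j s (mem_wordSections_iff.mp hs)]
    push_cast
    ring

lemma card_key (w : Fin (n+1) → Fin (2*m+2)) (j : Fin (2*m+2)) :
    (wordSections w).card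
    = ((wordSections (delWord w j)) ×ˢ (univ.filter fun x => w x = j)).card := by
  refine Finset.card_bij'
    (fun s hs => (delSec w j s (mem_wordSections_iff.mp hs), s j))
    (fun p _ => recSec w j p.1 p.2) ?_ ?_ ?_ ?_
  · intro s hs
    rw [Finset.mem_product]
    refine ⟨mem_wordSections_iff.mpr (delSec_mem w j s (mem_wordSections_iff.mp hs)), ?_⟩
    simp only [mem_filter, mem_univ, true_and]
    exact mem_wordSections_iff.mp hs j
  · intro p hp
    rw [Finset.mem_product] at hp
    have ht := mem_wordSections_iff.mp hp.1
    have hx : w p.2 = j := by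
      have := hp.2; simp only [mem_filter, mem_univ, true_and] at this; exact this
    exact mem_wordSections_iff.mpr (recSec_mem w j p.1 ht p.2 hx)
  · intro s hs
    exact recSec_delSec w j s (mem_wordSections_iff.mp hs)
  · intro p hp
    rw [Finset.mem_product] at hp
    have ht := mem_wordSections_iff.mp hp.1
    have hx : w p.2 = j := by
      have := hp.2; simp only [mem_filter, mem_univ, true_and] at this; exact this
    refine Prod.ext ?_ ?_
    · exact delSec_recSec w j p.1 ht p.2 hx (fun i => recSec_mem w j p.1 ht p.2 hx i)
    · show (if j = j then p.2 else _) = p.2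
      rw [if_pos rfl]


/-- For a surjective word on an alphabet of even size `k+1 = 2m+2` (so `k` odd), the
alternating sum over letters of the rational parities of the letter-deleted subwords
vanishes: `Σⱼ (-1)^j P(δⱼ*w) = 0`. -/
theorem alternating_sum_parity_delWord (n m : ℕ)
    (w : Fin (n + 1) → Fin (2 * m + 2)) (hw : Function.Surjective w) :
    ∑ j : Fin (2 * m + 2), (-1 : ℚ) ^ (j : ℕ) * wordParity (delWord w j) = 0 := by
  classical
  have hC : (wordSections w).Nonempty := by
    refine ⟨fun i => Classical.choose (hw i), ?_⟩
    rw [mem_wordSections_iff]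
    exact fun i => Classical.choose_spec (hw i)
  have hCpos : 0 < (wordSections w).card := card_pos.mpr hC
  have hCQ : ((wordSections w).card : ℚ) ≠ 0 := by
    exact_mod_cast Nat.pos_iff_ne_zero.mp hCpos
  have hmain : ∀ j : Fin (2*m+2), wordParity (delWord w j)
      = (∑ s ∈ wordSections w, (secSign s : ℚ)
          * (-1)^((j:ℕ) + (univ.filter fun i => s i < s j).card))
        / ((wordSections w).card : ℚ) := by
    intro j
    have hcard := card_key w j
    rw [card_product] at hcard
    have hNpos : 0 < (wordSections (delWord w j)).card := by
      rcases Nat.eq_zero_or_pos (wordSections (delWord w j)).card with h | h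
      · rw [h, zero_mul] at hcard; omega
      · exact h
    have hNQ : ((wordSections (delWord w j)).card : ℚ) ≠ 0 := by
      exact_mod_cast Nat.pos_iff_ne_zero.mp hNpos
    have hsum := sum_key w j
    rw [Finset.sum_product] at hsum
    simp only [Finset.sum_const, nsmul_eq_mul] at hsum
    rw [← Finset.mul_sum] at hsum
    rw [wordParity, div_eq_div_iff hNQ hCQ, hsum]
    have hcardQ : ((wordSections w).card : ℚ)
        = ((wordSections (delWord w j)).card : ℚ)
          * ((univ.filter fun x => w x = j).card : ℚ) := by
      exact_mod_cast hcard
    rw [hcardQ]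
    ring
  calc ∑ j : Fin (2*m+2), (-1 : ℚ) ^ (j : ℕ) * wordParity (delWord w j)
      = ∑ j : Fin (2*m+2), (∑ s ∈ wordSections w, (secSign s : ℚ)
          * (-1)^((univ.filter fun i => s i < s j).card))
          / ((wordSections w).card : ℚ) := by
        refine Finset.sum_congr rfl fun j _ => ?_
        rw [hmain j, mul_div_assoc', Finset.mul_sum]
        congr 1
        refine Finset.sum_congr rfl fun s _ => ?_
        rw [pow_add]
        have hsq : (-1:ℚ)^(j:ℕ) * (-1:ℚ)^(j:ℕ) = 1 := by
          rw [← pow_add, ← two_mul, pow_mul, neg_one_sq, one_pow]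
        calc (-1:ℚ)^(j:ℕ) * ((secSign s : ℚ) * ((-1)^(j:ℕ)
              * (-1)^((univ.filter fun i => s i < s j).card)))
            = ((-1:ℚ)^(j:ℕ) * (-1:ℚ)^(j:ℕ)) * ((secSign s : ℚ)
              * (-1)^((univ.filter fun i => s i < s j).card)) := by ring
          _ = (secSign s : ℚ) * (-1)^((univ.filter fun i => s i < s j).card) := by
              rw [hsq, one_mul]
    _ = (∑ s ∈ wordSections w, (secSign s : ℚ)
          * ∑ j : Fin (2*m+2), (-1:ℚ)^((univ.filter fun i => s i < s j).card))
          / ((wordSections w).card : ℚ) := by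
        rw [← Finset.sum_div]
        congr 1
        rw [Finset.sum_comm]
        refine Finset.sum_congr rfl fun s _ => ?_
        rw [Finset.mul_sum]
    _ = 0 := by
        rw [div_eq_zero_iff]
        left
        refine Finset.sum_eq_zero fun s hs => ?_
        have hinj : Function.Injective s := by
          have hsw := mem_wordSections_iff.mp hs
          exact fun a b h => by rw [← hsw a, ← hsw b, h]
        rw [sum_neg_one_pow_rank hinj, mul_zero]
end
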